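/- Let A be the 2×2 matrix with entries a₁₁ = 1 − μ²/(2L²), a₁₂ = μ²c₂/L⁴, a₂₁ = c₃μ²/L², a₂₂ = c_x + c₄μ²/L⁴, where 0 < μ < L, c₂, c₃, c₄ > 0, and 0 < c_x < 1. Suppose μ² ≤ (1 − c_x)/m₁ where m₁ = 4c₂c₃/L⁴ + 1/(4L²) + c₄/L⁴. Then the vector ε = [4c₂/L², 1]ᵀ satisfies Aε ≤ (1 − μ²/(4L²))·ε componentwise, and hence ρ(A) ≤ 1 − μ²/(4L²) < 1. -/

import Mathlib

/-!
Weighting the first coordinate by `4c₂/L²` makes the first row of `A ε ≤ (1 - μ²/(4L²)) ε` an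
equality, and with this weight the second row rearranges to `μ² m₁ ≤ 1 - cx`, which is the
hypothesis on `μ²`. For a nonnegative matrix, `A ε ≤ r ε` with `ε > 0` bounds every complex
eigenvalue by `r`: at a coordinate maximising `|vᵢ| / εᵢ` for an eigenvector `v`, the triangle
inequality gives `|z| |vᵢ| ≤ (|vᵢ| / εᵢ) (A ε)ᵢ ≤ r |vᵢ|`.
-/

open Matrix Module.End

namespace Matrix

variable {n : Type*} [Fintype n] [DecidableEq n]

theorem exists_mulVec_eq_smul_of_mem_spectrum {K : Type*} [Field K] {A : Matrix n n K} {z : K}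
    (hz : z ∈ spectrum K A) : ∃ v ≠ 0, A *ᵥ v = z • v := by
  rw [← spectrum_toLin', ← hasEigenvalue_iff_mem_spectrum] at hz
  obtain ⟨v, hv⟩ := hz.exists_hasEigenvector
  exact ⟨v, hv.2, hv.apply_eq_smul⟩

theorem norm_le_of_mem_spectrum_of_mulVec_le {A : Matrix n n ℝ} (hA : ∀ i j, 0 ≤ A i j)
    {ε : n → ℝ} (hε : ∀ i, 0 < ε i) {r : ℝ} (h : ∀ i, (A *ᵥ ε) i ≤ r * ε i) {z : ℂ}
    (hz : z ∈ spectrum ℂ (A.map (Complex.ofReal ·))) : ‖z‖ ≤ r := by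
  obtain ⟨v, hv0, hv⟩ := exists_mulVec_eq_smul_of_mem_spectrum hz
  obtain ⟨k, hk⟩ := Function.ne_iff.mp hv0
  have : Nonempty n := ⟨k⟩
  obtain ⟨i, hi⟩ := Finite.exists_max fun j ↦ ‖v j‖ / ε j
  have hvj (j : n) : ‖v j‖ ≤ ‖v i‖ / ε i * ε j :=
    (div_le_iff₀ (hε j)).mp (hi j)
  have hvi : 0 < ‖v i‖ := by
    have := (div_pos (norm_pos_iff.mpr hk) (hε k)).trans_le (hi k)
    exact (div_pos_iff_of_pos_right (hε i)).mp this
  have key : ‖z‖ * ‖v i‖ ≤ r * ‖v i‖ :=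
    calc ‖z‖ * ‖v i‖ = ‖∑ j, (A i j : ℂ) * v j‖ := by
          rw [← norm_mul, ← smul_eq_mul, ← Pi.smul_apply, ← hv]; rfl
      _ ≤ ∑ j, A i j * ‖v j‖ := by
          refine (norm_sum_le _ _).trans_eq (Finset.sum_congr rfl fun j _ ↦ ?_)
          rw [norm_mul, Complex.norm_real, Real.norm_of_nonneg (hA i j)]
      _ ≤ ∑ j, A i j * (‖v i‖ / ε i * ε j) := by
          gcongr with j
          exacts [hA i j, hvj j]
      _ = ‖v i‖ / ε i * (A *ᵥ ε) i := by
          rw [mulVec, dotProduct, Finset.mul_sum]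
          exact Finset.sum_congr rfl fun j _ ↦ by ring
      _ ≤ ‖v i‖ / ε i * (r * ε i) :=
          mul_le_mul_of_nonneg_left (h i) (div_nonneg (norm_nonneg _) (hε i).le)
      _ = r * ‖v i‖ := by field_simp [(hε i).ne']
  exact le_of_mul_le_mul_right key hvi

end Matrix

-- The transition matrix of the ETC-DNES error recursion at stepsize `γ = μ/L²`.
noncomputable def errorTransition (L μ c₂ c₃ c₄ cx : ℝ) : Matrix (Fin 2) (Fin 2) ℝ :=
  !![1 - μ ^ 2 / (2 * L ^ 2), μ ^ 2 * c₂ / L ^ 4; c₃ * μ ^ 2 / L ^ 2, cx + c₄ * μ ^ 2 / L ^ 4]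

section errorTransition

variable {L μ c₂ c₃ c₄ cx : ℝ}

theorem errorTransition_nonneg (hμL : μ ^ 2 ≤ 2 * L ^ 2) (hc₂ : 0 ≤ c₂) (hc₃ : 0 ≤ c₃)
    (hc₄ : 0 ≤ c₄) (hcx : 0 ≤ cx) (i j : Fin 2) : 0 ≤ errorTransition L μ c₂ c₃ c₄ cx i j := by
  have : μ ^ 2 / (2 * L ^ 2) ≤ 1 := div_le_one_of_le₀ hμL (by positivity)
  fin_cases i <;> fin_cases j <;> simp only [errorTransition, of_apply, Fin.zero_eta, Fin.mk_one,
    cons_val_zero, cons_val_one]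
  exacts [by linarith, by positivity, by positivity, by positivity]

theorem errorTransition_mulVec_le (hL : 0 < L) (hc₂ : 0 < c₂) (hc₃ : 0 < c₃) (hc₄ : 0 < c₄)
    (hμ2 : μ ^ 2 ≤ (1 - cx) / (4 * c₂ * c₃ / L ^ 4 + 1 / (4 * L ^ 2) + c₄ / L ^ 4)) (i : Fin 2) :
    (errorTransition L μ c₂ c₃ c₄ cx *ᵥ ![4 * c₂ / L ^ 2, 1]) i ≤
      (1 - μ ^ 2 / (4 * L ^ 2)) * ![4 * c₂ / L ^ 2, 1] i := by
  have hμ2' : μ ^ 2 * (4 * c₂ * c₃ / L ^ 4 + 1 / (4 * L ^ 2) + c₄ / L ^ 4) ≤ 1 - cx :=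
    (le_div_iff₀ (by positivity)).mp hμ2
  fin_cases i <;> simp only [errorTransition, mulVec, dotProduct, Fin.sum_univ_two, of_apply,
    Fin.zero_eta, Fin.mk_one, cons_val_zero, cons_val_one]
  · refine le_of_eq ?_
    field_simp
    ring
  · have hsecond : c₃ * μ ^ 2 / L ^ 2 * (4 * c₂ / L ^ 2) + c₄ * μ ^ 2 / L ^ 4
        + μ ^ 2 / (4 * L ^ 2) = μ ^ 2 * (4 * c₂ * c₃ / L ^ 4 + 1 / (4 * L ^ 2) + c₄ / L ^ 4) := by
      field_simp
      ring
    linarith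

end errorTransition

theorem stmt19_general (L μ c₂ c₃ c₄ cx : ℝ) (hμ : 0 < μ) (hL : μ < L)
    (hc₂ : 0 < c₂) (hc₃ : 0 < c₃) (hc₄ : 0 < c₄) (hcx0 : 0 < cx)
    (A : Matrix (Fin 2) (Fin 2) ℝ)
    (hA : A = Matrix.of ![![1 - μ ^ 2 / (2 * L ^ 2), μ ^ 2 * c₂ / L ^ 4],
                          ![c₃ * μ ^ 2 / L ^ 2, cx + c₄ * μ ^ 2 / L ^ 4]])
    (hμ2 : μ ^ 2 ≤ (1 - cx) / (4 * c₂ * c₃ / L ^ 4 + 1 / (4 * L ^ 2) + c₄ / L ^ 4)) :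
    (∀ i, A.mulVec ![4 * c₂ / L ^ 2, 1] i ≤ (1 - μ ^ 2 / (4 * L ^ 2)) * ![4 * c₂ / L ^ 2, 1] i) ∧
      (∀ z ∈ spectrum ℂ (A.map (Complex.ofReal ·)), ‖z‖ ≤ 1 - μ ^ 2 / (4 * L ^ 2)) ∧
      1 - μ ^ 2 / (4 * L ^ 2) < 1 := by
  have hL0 : 0 < L := hμ.trans hL
  have hμL : μ ^ 2 ≤ 2 * L ^ 2 := by nlinarith
  have hrows := errorTransition_mulVec_le hL0 hc₂ hc₃ hc₄ hμ2
  have hε : ∀ i, 0 < ![4 * c₂ / L ^ 2, 1] i := by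
    simp only [Fin.forall_fin_two, cons_val_zero, cons_val_one]
    exact ⟨by positivity, one_pos⟩
  subst hA
  refine ⟨hrows, fun z hz ↦ norm_le_of_mem_spectrum_of_mulVec_le
    (errorTransition_nonneg hμL hc₂.le hc₃.le hc₄.le hcx0.le) hε hrows hz, ?_⟩
  have : 0 < μ ^ 2 / (4 * L ^ 2) := by positivity
  linarith

theorem stmt19 (L μ c₂ c₃ c₄ cx : ℝ) (hμ : 0 < μ) (hL : μ < L)
    (hc₂ : 0 < c₂) (hc₃ : 0 < c₃) (hc₄ : 0 < c₄) (hcx0 : 0 < cx) (hcx1 : cx < 1)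
    (A : Matrix (Fin 2) (Fin 2) ℝ)
    (hA : A = Matrix.of ![![1 - μ ^ 2 / (2 * L ^ 2), μ ^ 2 * c₂ / L ^ 4],
                          ![c₃ * μ ^ 2 / L ^ 2, cx + c₄ * μ ^ 2 / L ^ 4]])
    (hμ2 : μ ^ 2 ≤ (1 - cx) / (4 * c₂ * c₃ / L ^ 4 + 1 / (4 * L ^ 2) + c₄ / L ^ 4)) :
    (∀ i, A.mulVec ![4 * c₂ / L ^ 2, 1] i ≤ (1 - μ ^ 2 / (4 * L ^ 2)) * ![4 * c₂ / L ^ 2, 1] i) ∧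
      (∀ z ∈ spectrum ℂ (A.map (Complex.ofReal ·)), ‖z‖ ≤ 1 - μ ^ 2 / (4 * L ^ 2)) ∧
      1 - μ ^ 2 / (4 * L ^ 2) < 1 :=
  stmt19_general L μ c₂ c₃ c₄ cx hμ hL hc₂ hc₃ hc₄ hcx0 A hA hμ2
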